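/- arXiv:1212.6848 — 2 statements merged into one kernel-verified Lean document; each statement's English description precedes it below -/
import Mathlib

section
/- Let n ≥ 1 and let G'' be the signed graph with vertex set {v, b, v_1, …, v_n} in which {v_1, …, v_n} is a clique, v and b are each adjacent to every v_i, v and b are not adjacent, and every edge of G'' is negative. Then β(G'') ≥ pt(G'') + 1/2, where pt(G'') = n(n−1)/4 + n + (n+1)/4. -/
/-- Sign convention: `true` = positive edge, `false` = negative edge.
An edge `e` is *consistent* with the partition `(A, Aᶜ)` of the vertex set if it is
positive when both endpoints lie on the same side and negative otherwise. -/
def SignConsistent {V : Type*} (sign : Sym2 V → Bool) (A : Set V) (e : Sym2 V) : Prop :=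
  ∀ u v : V, e = s(u, v) → (sign e = true ↔ (u ∈ A ↔ v ∈ A))

/-- The number of edges of the balanced subgraph induced by the partition `(A, Aᶜ)`. -/
noncomputable def balCount {V : Type*} (G : SimpleGraph V) (sign : Sym2 V → Bool)
    (A : Set V) : ℕ :=
  {e | e ∈ G.edgeSet ∧ SignConsistent sign A e}.ncard

/-- `beta G sign` = β(G): the maximum number of edges of a balanced subgraph of the
signed graph `(G, sign)`. -/
noncomputable def beta {V : Type*} (G : SimpleGraph V) (sign : Sym2 V → Bool) : ℕ :=
  sSup {n | ∃ A : Set V, n = balCount G sign A}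

/-- The Poljak–Turzík bound `pt G = m/2 + (n − t)/4`, where `m` is the number of edges,
`n` the number of vertices and `t` the number of connected components. -/
noncomputable def pt {V : Type*} (G : SimpleGraph V) : ℚ :=
  (G.edgeSet.ncard : ℚ) / 2 +
    ((Nat.card V : ℚ) - (Nat.card G.ConnectedComponent : ℚ)) / 4

/-- β of the signed subgraph induced on the vertex set `U`. -/
noncomputable def betaOn {V : Type*} (G : SimpleGraph V) (sign : Sym2 V → Bool)
    (U : Set V) : ℕ :=
  beta (G.induce U) (fun e => sign (Sym2.map Subtype.val e))

/-- `pt` of the subgraph induced on the vertex set `U`. -/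
noncomputable def ptOn {V : Type*} (G : SimpleGraph V) (U : Set V) : ℚ :=
  pt (G.induce U)

/-- The signed graph `(G, sign)` is balanced: some partition `(A, Aᶜ)` is consistent
with every edge. -/
def IsBalanced {V : Type*} (G : SimpleGraph V) (sign : Sym2 V → Bool) : Prop :=
  ∃ A : Set V, ∀ u v : V, G.Adj u v → (sign s(u, v) = true ↔ (u ∈ A ↔ v ∈ A))

/-- `a`, `b`, `c` form a positive triangle: all three edges exist and the number of
negative edges among them is even. -/
def PositiveTriangle {V : Type*} (G : SimpleGraph V) (sign : Sym2 V → Bool)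
    (a b c : V) : Prop :=
  G.Adj a b ∧ G.Adj b c ∧ G.Adj c a ∧
    Even ((if sign s(a, b) then 0 else 1) + (if sign s(b, c) then 0 else 1) +
      (if sign s(c, a) then 0 else 1))

/-- `X` is (the vertex set of) a connected component of `G − S`. -/
def IsCompOf {V : Type*} (G : SimpleGraph V) (S X : Set V) : Prop :=
  Disjoint X S ∧ (G.induce X).Connected ∧
    ∀ x ∈ X, ∀ y : V, G.Adj x y → y ∉ S → y ∈ X

/-- The neighborhood of a vertex set `X`. -/
def nbhd {V : Type*} (G : SimpleGraph V) (X : Set V) : Set V :=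
  {v | v ∉ X ∧ ∃ x ∈ X, G.Adj x v}


/-! When every edge is negative, a partition `(A, Aᶜ)` is consistent exactly with the edges
crossing it, so `β(G'')` is the maximum cut of `K_{n+2}` minus the edge `vb`. Putting `v` and `b`
on the larger side of a near-equal bipartition keeps every crossing pair an edge, giving a cut of
`⌊(n+3)/2⌋ ⌊(n+2)/2⌋ ≥ (n+1)(n+3)/4` edges. Since `G''` is connected with `C(n+2,2) - 1` edges,
`pt(G'') + 1/2` is exactly `(n+1)(n+3)/4`. -/

namespace SimpleGraph

variable {V : Type*}

lemma ncard_edgeSet_top_deleteEdges_singleton [Fintype V] {u v : V} (huv : u ≠ v) :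
    ((⊤ : SimpleGraph V).deleteEdges {s(u, v)}).edgeSet.ncard = (Fintype.card V).choose 2 - 1 := by
  classical
  have htop : (⊤ : SimpleGraph V).edgeSet.ncard = (Fintype.card V).choose 2 := by
    rw [Set.ncard_eq_toFinset_card', ← card_edgeFinset_top_eq_card_choose_two]
    rfl
  rw [edgeSet_deleteEdges, Set.ncard_sdiff_singleton_of_mem (by simpa using huv), htop]

lemma connected_top_deleteEdges_singleton {u v w : V} (hwu : w ≠ u) (hwv : w ≠ v) :
    ((⊤ : SimpleGraph V).deleteEdges {s(u, v)}).Connected := by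
  refine (connected_iff_exists_forall_reachable _).2 ⟨w, fun x => ?_⟩
  rcases eq_or_ne w x with rfl | hwx
  · rfl
  refine Adj.reachable ?_
  simp only [deleteEdges_adj, top_adj, Set.mem_singleton_iff, Sym2.eq_iff]
  tauto

lemma natCard_connectedComponent_eq_one {G : SimpleGraph V} (hG : G.Connected) :
    Nat.card G.ConnectedComponent = 1 :=
  have := hG.preconnected.subsingleton_connectedComponent
  have := hG.nonempty.map G.connectedComponentMk
  Nat.card_eq_one_iff_unique.2 ⟨inferInstance, inferInstance⟩

end SimpleGraph

open SimpleGraph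

variable {V : Type*}

lemma pt_of_connected {G : SimpleGraph V} (hG : G.Connected) :
    pt G = G.edgeSet.ncard / 2 + (Nat.card V - 1) / 4 := by
  rw [pt, natCard_connectedComponent_eq_one hG, Nat.cast_one]

lemma balCount_le_beta {G : SimpleGraph V} (hE : G.edgeSet.Finite) (sign : Sym2 V → Bool)
    (A : Set V) : balCount G sign A ≤ beta G sign :=
  le_csSup ⟨G.edgeSet.ncard, by
    rintro _ ⟨B, rfl⟩
    exact Set.ncard_le_ncard (fun e he => he.1) hE⟩ ⟨A, rfl⟩

lemma ncard_mul_ncard_compl_le_balCount_false [Finite V] {G : SimpleGraph V} {A : Set V}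
    (hA : ∀ a ∈ A, ∀ b ∉ A, G.Adj a b) :
    A.ncard * Aᶜ.ncard ≤ balCount G (fun _ => false) A := by
  have hinj : Set.InjOn (fun p : V × V => s(p.1, p.2)) (A ×ˢ Aᶜ) := by
    rintro ⟨a, b⟩ ⟨ha, hb⟩ ⟨a', b'⟩ ⟨ha', hb'⟩ h
    simp only [Set.mem_compl_iff] at ha hb ha' hb'
    rcases Sym2.eq_iff.1 h with ⟨rfl, rfl⟩ | ⟨rfl, rfl⟩
    · rfl
    · exact absurd ha hb'
  rw [← Set.ncard_prod, ← hinj.ncard_image, balCount]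
  refine Set.ncard_le_ncard ?_ (Set.toFinite _)
  rintro _ ⟨⟨a, b⟩, ⟨ha, hb⟩, rfl⟩
  refine ⟨hA a ha b hb, fun u v huv => ?_⟩
  rcases Sym2.eq_iff.1 huv with ⟨rfl, rfl⟩ | ⟨rfl, rfl⟩ <;> simp_all

lemma le_balCount_top_deleteEdges_Iio {m k : ℕ} (hk : 2 ≤ k) (hkm : k < m + 2) :
    k * (m + 2 - k) ≤ balCount ((⊤ : SimpleGraph (Fin (m + 2))).deleteEdges {s(0, 1)})
      (fun _ => false) (Set.Iio ⟨k, hkm⟩) := by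
  have hA : (Set.Iio (⟨k, hkm⟩ : Fin (m + 2))).ncard = k := by
    rw [Set.ncard_eq_toFinset_card', Set.toFinset_Iio, Fin.card_Iio]
  have hAc : (Set.Iio (⟨k, hkm⟩ : Fin (m + 2)))ᶜ.ncard = m + 2 - k := by
    rw [Set.compl_Iio, Set.ncard_eq_toFinset_card', Set.toFinset_Ici, Fin.card_Ici]
  calc k * (m + 2 - k) = _ * _ := by rw [hA, hAc]
    _ ≤ _ := ncard_mul_ncard_compl_le_balCount_false fun a ha b hb => ?_
  simp only [Set.mem_Iio, not_lt, Fin.lt_def] at ha hb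
  simp only [deleteEdges_adj, top_adj, Set.mem_singleton_iff, Sym2.eq_iff, Fin.ext_iff,
    Fin.val_zero, Fin.val_one]
  omega

lemma succ_mul_add_three_le_four_mul_div_two_mul_div_two (n : ℕ) :
    (n + 1) * (n + 3) ≤ 4 * ((n + 3) / 2 * ((n + 2) / 2)) := by
  rcases Nat.even_or_odd' n with ⟨t, rfl | rfl⟩
  · rw [show (2 * t + 3) / 2 = t + 1 by omega, show (2 * t + 2) / 2 = t + 1 by omega]
    nlinarith
  · rw [show (2 * t + 1 + 3) / 2 = t + 2 by omega, show (2 * t + 1 + 2) / 2 = t + 1 by omega]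
    nlinarith

/-- For `n ≥ 1`, let `G''` be the signed graph on vertices
`{v, b, v₁, …, vₙ}` (here `Fin (n+2)`, with `v = 0`, `b = 1`) in which `{v₁, …, vₙ}`
is a clique, `v` and `b` are adjacent to every `vᵢ` but not to each other — i.e. the
complete graph minus the edge `vb` — and every edge is negative. Then
`β(G'') ≥ pt(G'') + 1/2`, where `pt(G'') = n(n−1)/4 + n + (n+1)/4`. -/
theorem stmt14 (n : ℕ) (hn : 1 ≤ n) :
    pt ((⊤ : SimpleGraph (Fin (n + 2))).deleteEdges {s((0 : Fin (n + 2)), 1)}) =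
        (n : ℚ) * ((n : ℚ) - 1) / 4 + (n : ℚ) + ((n : ℚ) + 1) / 4 ∧
      (beta ((⊤ : SimpleGraph (Fin (n + 2))).deleteEdges {s((0 : Fin (n + 2)), 1)})
          (fun _ => false) : ℚ) ≥
        pt ((⊤ : SimpleGraph (Fin (n + 2))).deleteEdges {s((0 : Fin (n + 2)), 1)})
          + 1 / 2 := by
  set G := (⊤ : SimpleGraph (Fin (n + 2))).deleteEdges {s((0 : Fin (n + 2)), 1)}
  have hconn : G.Connected :=
    connected_top_deleteEdges_singleton (w := ⟨2, by omega⟩) (by simp [Fin.ext_iff]) (by simp)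
  have hpt : pt G = (n : ℚ) * ((n : ℚ) - 1) / 4 + (n : ℚ) + ((n : ℚ) + 1) / 4 := by
    rw [pt_of_connected hconn, ncard_edgeSet_top_deleteEdges_singleton zero_ne_one,
      Nat.card_eq_fintype_card, Fintype.card_fin, Nat.cast_sub (Nat.choose_pos (by omega)),
      Nat.cast_choose_two]
    push_cast
    ring
  refine ⟨hpt, ?_⟩
  have hcut := le_balCount_top_deleteEdges_Iio (m := n) (k := (n + 3) / 2) (by omega) (by omega)
  rw [show n + 2 - (n + 3) / 2 = (n + 2) / 2 by omega] at hcut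
  have hbeta := hcut.trans (balCount_le_beta (Set.toFinite _) _ _)
  have harith := succ_mul_add_three_le_four_mul_div_two_mul_div_two n
  rw [hpt, ge_iff_le]
  qify at hbeta harith
  linarith
end

section
/- Let G be a connected signed graph and let u, x, y be vertices such that the only neighbors of u are x and y, the edges ux, uy and xy all exist, the triangle uxy is negative (it has an odd number of negative edges), and the edge xy is not a bridge of G−u. Let G' be the signed graph obtained from G by deleting the vertex u and the edge xy. Then G' is connected, β(G) = β(G') + 2, pt(G) = pt(G') + 7/4, and hence β(G) − pt(G) = β(G') − pt(G') + 1/4. -/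
open SimpleGraph
set_option maxHeartbeats 1000000


lemma signConsistent_pair {V : Type*} (sign : Sym2 V → Bool) (A : Set V) (a b : V) :
    SignConsistent sign A s(a, b) ↔ (sign s(a, b) = true ↔ (a ∈ A ↔ b ∈ A)) := by
  constructor
  · intro h; exact h a b rfl
  · intro h p q hpq
    rw [Sym2.eq_iff] at hpq
    rcases hpq with ⟨rfl, rfl⟩ | ⟨rfl, rfl⟩
    · exact h
    · exact h.trans Iff.comm

lemma le_beta {V : Type*} [Finite V] (G : SimpleGraph V) (sign : Sym2 V → Bool) (A : Set V) :
    balCount G sign A ≤ beta G sign := by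
  apply le_csSup
  · refine ⟨G.edgeSet.ncard, ?_⟩
    rintro n ⟨B, rfl⟩
    exact Set.ncard_le_ncard (fun e he => he.1) (Set.toFinite _)
  · exact ⟨A, rfl⟩

lemma beta_le {V : Type*} (G : SimpleGraph V) (sign : Sym2 V → Bool) {c : ℕ}
    (h : ∀ A : Set V, balCount G sign A ≤ c) : beta G sign ≤ c := by
  refine csSup_le ⟨balCount G sign ∅, ∅, rfl⟩ ?_
  rintro n ⟨A, rfl⟩; exact h A

lemma beta_spec {V : Type*} [Finite V] (G : SimpleGraph V) (sign : Sym2 V → Bool) :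
    ∃ A : Set V, beta G sign = balCount G sign A := by
  have : beta G sign ∈ {n | ∃ A : Set V, n = balCount G sign A} := by
    refine Nat.sSup_mem ⟨balCount G sign ∅, ∅, rfl⟩ ?_
    refine ⟨G.edgeSet.ncard, ?_⟩
    rintro n ⟨B, rfl⟩
    exact Set.ncard_le_ncard (fun e he => he.1) (Set.toFinite _)
  exact this

lemma card_cc_eq_one {V : Type*} {G : SimpleGraph V} (h : G.Connected) :
    Nat.card G.ConnectedComponent = 1 := by
  rw [Nat.card_eq_one_iff_unique]
  constructor
  · constructor
    intro c d
    obtain ⟨v, rfl⟩ := c.exists_rep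
    obtain ⟨w, rfl⟩ := d.exists_rep
    exact ConnectedComponent.eq.mpr (h.preconnected v w)
  · exact ⟨G.connectedComponentMk h.nonempty.some⟩

lemma connected_of_card_cc {V : Type*} {G : SimpleGraph V} (hne : Nonempty V)
    (h : Nat.card G.ConnectedComponent = 1) : G.Connected := by
  rw [Nat.card_eq_one_iff_unique] at h
  have := h.1
  have : Nonempty V := hne
  refine ⟨fun a b => ?_⟩
  exact ConnectedComponent.eq.mp (Subsingleton.elim _ _)

lemma reach_aux {V : Type*} (G : SimpleGraph V) (u x y : V)
    (hnbr : ∀ w : V, G.Adj u w ↔ (w = x ∨ w = y)) (hxy : G.Adj x y) :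
    ∀ n : ℕ, ∀ (a b : V) (ha : a ≠ u) (hb : b ≠ u) (w : G.Walk a b), w.length ≤ n →
      (G.induce ({u}ᶜ : Set V)).Reachable ⟨a, ha⟩ ⟨b, hb⟩ := by
  intro n
  induction n with
  | zero =>
    intro a b ha hb w hw
    cases w with
    | nil => exact Reachable.refl _
    | cons h p => simp at hw
  | succ n ih =>
    intro a b ha hb w hw
    cases w with
    | nil => exact Reachable.refl _
    | @cons _ c _ h p =>
      by_cases hc : c = u
      · cases p with
        | nil => exact absurd hc hb
        | @cons _ d _ h' p' =>
          have h'' : G.Adj u d := hc ▸ h'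
          have hd : d ≠ u := h''.ne'
          have ih' := ih d b hd hb p' (by simp at hw ⊢; omega)
          have ha' : a = x ∨ a = y := (hnbr a).mp (hc ▸ h.symm)
          have hd' : d = x ∨ d = y := (hnbr d).mp h''
          refine Reachable.trans ?_ ih'
          by_cases had : a = d
          · subst had; exact Reachable.refl _
          · have hadj : G.Adj a d := by
              rcases ha' with rfl | rfl <;> rcases hd' with rfl | rfl
              · exact absurd rfl had
              · exact hxy
              · exact hxy.symm
              · exact absurd rfl had
            exact Adj.reachable (by exact hadj :
              (G.induce ({u}ᶜ : Set V)).Adj ⟨a, ha⟩ ⟨d, hd⟩)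
      · have hadj : (G.induce ({u}ᶜ : Set V)).Adj ⟨a, ha⟩ ⟨c, hc⟩ := h
        exact hadj.reachable.trans (ih c b hc hb p (by simp at hw; omega))

lemma aux_tauto (P Q : Prop) (b1 b2 b3 : Bool)
    (hpar : (b2 = true ↔ b3 = true) ↔ ¬(b1 = true))
    (hc : ¬(b1 = true ↔ (P ↔ Q))) :
    b3 = true ↔ ((b2 = true ↔ P) ↔ Q) := by
  cases b1 <;> cases b2 <;> cases b3 <;> simp_all <;> tauto

/-- second case of kernelization Rule 10. Let `G` be a connected
signed graph and `u, x, y` vertices such that the only neighbors of `u` are `x` and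
`y`, the edges `ux`, `uy`, `xy` all exist, the triangle `uxy` is negative (odd number
of negative edges), and `xy` is not a bridge of `G − u` (deleting it does not increase
the number of connected components of `G − u`). Let `G'` be obtained from `G` by
deleting the vertex `u` and the edge `xy`. Then `G'` is connected,
`β(G) = β(G') + 2`, `pt(G) = pt(G') + 7/4`, and hence
`β(G) − pt(G) = β(G') − pt(G') + 1/4`. -/
theorem stmt18 {V : Type*} [Fintype V] (G : SimpleGraph V) (sign : Sym2 V → Bool)
    (hconn : G.Connected) (u x y : V)
    (hnbr : ∀ w : V, G.Adj u w ↔ (w = x ∨ w = y))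
    (hux : G.Adj u x) (huy : G.Adj u y) (hxy : G.Adj x y)
    (hodd : Odd ((if sign s(u, x) then 0 else 1) + (if sign s(u, y) then 0 else 1) +
      (if sign s(x, y) then 0 else 1)))
    (hnotbridge :
      Nat.card ((G.deleteEdges {s(x, y)}).induce ({u}ᶜ : Set V)).ConnectedComponent =
        Nat.card (G.induce ({u}ᶜ : Set V)).ConnectedComponent) :
    ((G.deleteEdges {s(x, y)}).induce ({u}ᶜ : Set V)).Connected ∧
      (beta G sign : ℚ) =
        (beta ((G.deleteEdges {s(x, y)}).induce ({u}ᶜ : Set V))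
          (fun e => sign (Sym2.map Subtype.val e)) : ℚ) + 2 ∧
      pt G = pt ((G.deleteEdges {s(x, y)}).induce ({u}ᶜ : Set V)) + 7 / 4 ∧
      (beta G sign : ℚ) - pt G =
        (beta ((G.deleteEdges {s(x, y)}).induce ({u}ᶜ : Set V))
          (fun e => sign (Sym2.map Subtype.val e)) : ℚ) -
          pt ((G.deleteEdges {s(x, y)}).induce ({u}ᶜ : Set V)) + 1 / 4 := by
  classical
  set S : Set V := ({u}ᶜ : Set V) with hS
  set G' : SimpleGraph S := (G.deleteEdges {s(x, y)}).induce S with hG'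
  set sign' : Sym2 S → Bool := fun e => sign (Sym2.map Subtype.val e) with hsign'
  have hxu : x ≠ u := hux.ne'
  have hyu : y ≠ u := huy.ne'
  have hxyne : x ≠ y := hxy.ne
  have hxS : x ∈ S := by simp [hS, hxu]
  have hyS : y ∈ S := by simp [hS, hyu]
  have hneS : Nonempty S := ⟨⟨x, hxS⟩⟩
  -- connectivity of G - u
  have hGu : (G.induce S).Connected := by
    refine ⟨fun a b => ?_⟩
    obtain ⟨w⟩ := hconn.preconnected a.1 b.1
    have := reach_aux G u x y hnbr hxy w.length a.1 b.1 a.2 b.2 w le_rfl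
    simpa using this
  -- connectivity of G'
  have hG'conn : G'.Connected := by
    refine connected_of_card_cc hneS ?_
    rw [hnotbridge]
    exact card_cc_eq_one hGu
  -- distinctness of the three special edges
  have hexy_ux : s(x, y) ≠ s(u, x) := by
    intro h
    rcases Sym2.eq_iff.mp h with ⟨h1, h2⟩ | ⟨h1, h2⟩ <;> tauto
  have hexy_uy : s(x, y) ≠ s(u, y) := by
    intro h
    rcases Sym2.eq_iff.mp h with ⟨h1, h2⟩ | ⟨h1, h2⟩ <;> tauto
  have heux_uy : s(u, x) ≠ s(u, y) := by
    intro h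
    rcases Sym2.eq_iff.mp h with ⟨h1, h2⟩ | ⟨h1, h2⟩ <;> tauto
  set T : Set (Sym2 V) := {s(x, y), s(u, x), s(u, y)} with hT
  have hTcard : T.ncard = 3 := by
    rw [hT, Set.ncard_insert_of_notMem (by simp [hexy_ux, hexy_uy]),
      Set.ncard_pair heux_uy]
  have hTsub : T ⊆ G.edgeSet := by
    rintro e (rfl | rfl | rfl)
    · exact hxy
    · exact hux
    · exact huy
  -- the image lemma
  have himg : ∀ P : Sym2 V → Prop,
      Sym2.map (Subtype.val : S → V) ''
        {e' | e' ∈ G'.edgeSet ∧ P (Sym2.map Subtype.val e')} =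
      {e | e ∈ G.edgeSet ∧ e ∉ T ∧ P e} := by
    intro P
    ext e
    constructor
    · rintro ⟨e', ⟨he'G, hPe'⟩, rfl⟩
      induction e' using Sym2.ind with
      | _ a b =>
        rw [Sym2.map_pair_eq]
        have hadj : (G.deleteEdges {s(x, y)}).Adj a.1 b.1 := he'G
        rw [deleteEdges_adj] at hadj
        refine ⟨hadj.1, ?_, by rwa [Sym2.map_pair_eq] at hPe'⟩
        rintro (h | h | h)
        · exact hadj.2 (by simp [h])
        · rcases Sym2.eq_iff.mp h with ⟨h1, _⟩ | ⟨_, h2⟩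
          · exact a.2 (by simp [h1])
          · exact b.2 (by simp [h2])
        · have h' : s(a.1, b.1) = s(u, y) := h
          rcases Sym2.eq_iff.mp h' with ⟨h1, _⟩ | ⟨_, h2⟩
          · exact a.2 (by simp [h1])
          · exact b.2 (by simp [h2])
    · intro he
      induction e using Sym2.ind with
      | _ a b =>
        obtain ⟨heG, heT, hPe⟩ := he
        have hadj : G.Adj a b := heG
        have ha : a ≠ u := by
          rintro rfl
          rcases (hnbr b).mp hadj with rfl | rfl
          · exact heT (by simp [hT])
          · exact heT (by simp [hT])
        have hb : b ≠ u := by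
          rintro rfl
          rcases (hnbr a).mp hadj.symm with rfl | rfl
          · exact heT (by rw [hT]; right; left; exact Sym2.eq_swap)
          · exact heT (by rw [hT]; right; right; exact Sym2.eq_swap)
        refine ⟨s((⟨a, by simp [hS, ha]⟩ : S), (⟨b, by simp [hS, hb]⟩ : S)),
          ⟨?_, ?_⟩, by rw [Sym2.map_pair_eq]⟩
        · show (G.deleteEdges {s(x, y)}).Adj a b
          rw [deleteEdges_adj]
          exact ⟨hadj, fun h => heT (by simp [hT]; tauto)⟩
        · rw [Sym2.map_pair_eq]; exact hPe
    -- consistency transfer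
  have hconsiff : ∀ (A : Set V) (e' : Sym2 S),
      SignConsistent sign' (Subtype.val ⁻¹' A) e' ↔
        SignConsistent sign A (Sym2.map Subtype.val e') := by
    intro A e'
    induction e' using Sym2.ind with
    | _ a b =>
      rw [Sym2.map_pair_eq, signConsistent_pair, signConsistent_pair]
      have : sign' s(a, b) = sign s(a.1, b.1) := by
        simp only [hsign']; rw [Sym2.map_pair_eq]
      rw [this]
      rfl
  -- edge count
  have hedgesplit : G.edgeSet = {e | e ∈ G.edgeSet ∧ e ∉ T ∧ True} ∪ T := by
    ext e
    constructor
    · intro he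
      by_cases h : e ∈ T
      · exact Or.inr h
      · exact Or.inl ⟨he, h, trivial⟩
    · rintro (he | he)
      · exact he.1
      · exact hTsub he
  have hdisj : ∀ P : Sym2 V → Prop, Disjoint {e | e ∈ G.edgeSet ∧ e ∉ T ∧ P e} T := by
    intro P
    rw [Set.disjoint_left]
    rintro e ⟨_, heT, _⟩
    exact heT
  have hinj : Function.Injective (Sym2.map (Subtype.val : S → V)) :=
    Sym2.map.injective Subtype.val_injective
  have hecard : G.edgeSet.ncard = G'.edgeSet.ncard + 3 := by
    rw [hedgesplit, Set.ncard_union_eq (hdisj _) (Set.toFinite _) (Set.toFinite _),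
      hTcard, ← himg (fun _ => True), Set.ncard_image_of_injective _ hinj]
    congr 1
    simp
  -- balCount decomposition
  have hbal : ∀ A : Set V, balCount G sign A =
      balCount G' sign' (Subtype.val ⁻¹' A) +
        {e ∈ T | SignConsistent sign A e}.ncard := by
    intro A
    have hsplit : {e | e ∈ G.edgeSet ∧ SignConsistent sign A e} =
        {e | e ∈ G.edgeSet ∧ e ∉ T ∧ SignConsistent sign A e} ∪
          {e ∈ T | SignConsistent sign A e} := by
      ext e
      constructor
      · rintro ⟨he, hc⟩
        by_cases h : e ∈ T
        · exact Or.inr ⟨h, hc⟩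
        · exact Or.inl ⟨he, h, hc⟩
      · rintro (⟨he, _, hc⟩ | ⟨he, hc⟩)
        · exact ⟨he, hc⟩
        · exact ⟨hTsub he, hc⟩
    rw [balCount, hsplit, Set.ncard_union_eq ?_ (Set.toFinite _) (Set.toFinite _),
      ← himg (SignConsistent sign A), Set.ncard_image_of_injective _ hinj]
    · congr 1
      rw [balCount]
      congr 1
      ext e'
      exact and_congr_right fun _ => (hconsiff A e').symm
    · rw [Set.disjoint_left]
      rintro e ⟨_, heT, _⟩ ⟨heT', _⟩
      exact heT heT'
  -- not all three special edges can be consistent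
  have hnotall : ∀ A : Set V, ¬(SignConsistent sign A s(x, y) ∧
      SignConsistent sign A s(u, x) ∧ SignConsistent sign A s(u, y)) := by
    rintro A ⟨c1, c2, c3⟩
    rw [signConsistent_pair] at c1 c2 c3
    cases h1 : sign s(x, y) <;> cases h2 : sign s(u, x) <;> cases h3 : sign s(u, y) <;>
      simp only [h1, h2, h3] at hodd c1 c2 c3 <;>
      simp at hodd c1 c2 c3 <;> tauto
  have hT_le : ∀ A : Set V, {e ∈ T | SignConsistent sign A e}.ncard ≤ 2 := by
    intro A
    have hss : {e ∈ T | SignConsistent sign A e} ⊂ T := by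
      refine ⟨fun e he => he.1, ?_⟩
      intro hsub
      exact hnotall A ⟨(hsub (show s(x, y) ∈ T by simp [hT])).2,
        (hsub (show s(u, x) ∈ T by simp [hT])).2,
        (hsub (show s(u, y) ∈ T by simp [hT])).2⟩
    have := Set.ncard_lt_ncard hss (Set.toFinite T)
    omega
  have hT_ge : ∀ A' : Set S, ∃ A : Set V, Subtype.val ⁻¹' A = A' ∧
      2 ≤ {e ∈ T | SignConsistent sign A e}.ncard := by
    intro A'
    set B : Set V := Subtype.val '' A' with hB
    have hBu : u ∉ B := by
      rintro ⟨a, _, ha⟩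
      exact a.2 (by simp [ha])
    set A : Set V := B ∪ {v | v = u ∧ (sign s(u, x) = true ↔ x ∈ B)} with hA
    have hxA : x ∈ A ↔ x ∈ B := by
      constructor
      · rintro (h | ⟨h, _⟩)
        · exact h
        · exact absurd h hxu
      · exact fun h => Or.inl h
    have hyA : y ∈ A ↔ y ∈ B := by
      constructor
      · rintro (h | ⟨h, _⟩)
        · exact h
        · exact absurd h hyu
      · exact fun h => Or.inl h
    have huA : u ∈ A ↔ (sign s(u, x) = true ↔ x ∈ B) := by
      constructor
      · rintro (h | ⟨_, h⟩)
        · exact absurd h hBu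
        · exact h
      · exact fun h => Or.inr ⟨rfl, h⟩
    have hpre : Subtype.val ⁻¹' A = A' := by
      ext a
      simp only [Set.mem_preimage, hA, Set.mem_union, Set.mem_setOf_eq]
      constructor
      · rintro (h | ⟨h, _⟩)
        · exact (Subtype.val_injective.mem_set_image).mp h
        · exact absurd h a.2
      · intro h
        exact Or.inl ⟨a, h, rfl⟩
    refine ⟨A, hpre, ?_⟩
    have cux : SignConsistent sign A s(u, x) := by
      rw [signConsistent_pair, huA, hxA]
      tauto
    by_cases hc : sign s(x, y) = true ↔ (x ∈ A ↔ y ∈ A)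
    · have cxy : SignConsistent sign A s(x, y) := (signConsistent_pair _ _ _ _).mpr hc
      have hsub : ({s(x, y), s(u, x)} : Set (Sym2 V)) ⊆
          {e ∈ T | SignConsistent sign A e} := by
        rintro e (rfl | rfl)
        · exact ⟨by simp [hT], cxy⟩
        · exact ⟨by simp [hT], cux⟩
      calc 2 = ({s(x, y), s(u, x)} : Set (Sym2 V)).ncard := (Set.ncard_pair hexy_ux).symm
        _ ≤ _ := Set.ncard_le_ncard hsub (Set.toFinite _)
    · have hpar : (sign s(u, x) = true ↔ sign s(u, y) = true) ↔
          ¬(sign s(x, y) = true) := by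
        cases h1 : sign s(x, y) <;> cases h2 : sign s(u, x) <;> cases h3 : sign s(u, y) <;>
          simp [h1, h2, h3, Nat.odd_iff] at hodd ⊢
      have cuy : SignConsistent sign A s(u, y) := by
        rw [signConsistent_pair, huA, hyA]
        rw [hxA, hyA] at hc
        exact aux_tauto _ _ _ _ _ hpar hc
      have hsub : ({s(u, x), s(u, y)} : Set (Sym2 V)) ⊆
          {e ∈ T | SignConsistent sign A e} := by
        rintro e (rfl | rfl)
        · exact ⟨by simp [hT], cux⟩
        · exact ⟨by simp [hT], cuy⟩
      calc 2 = ({s(u, x), s(u, y)} : Set (Sym2 V)).ncard := (Set.ncard_pair heux_uy).symm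
        _ ≤ _ := Set.ncard_le_ncard hsub (Set.toFinite _)
  -- beta equality
  have hbeta : beta G sign = beta G' sign' + 2 := by
    apply le_antisymm
    · apply beta_le
      intro A
      rw [hbal A]
      exact add_le_add (le_beta G' sign' _) (hT_le A)
    · obtain ⟨A', hA'⟩ := beta_spec G' sign'
      obtain ⟨A, hpre, h2⟩ := hT_ge A'
      calc beta G' sign' + 2 = balCount G' sign' (Subtype.val ⁻¹' A) + 2 := by
            rw [hA', hpre]
        _ ≤ balCount G' sign' (Subtype.val ⁻¹' A) +
              {e ∈ T | SignConsistent sign A e}.ncard := add_le_add le_rfl h2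
        _ = balCount G sign A := (hbal A).symm
        _ ≤ beta G sign := le_beta G sign A
  -- vertex count
  have hn : (Nat.card V : ℚ) = (Nat.card S : ℚ) + 1 := by
    have h := Set.ncard_add_ncard_compl ({u} : Set V)
    rw [Set.ncard_singleton] at h
    have h2 : Nat.card S = S.ncard := Nat.card_coe_set_eq S
    have h3 : S.ncard = ({u}ᶜ : Set V).ncard := by rw [hS]
    rw [h2, h3]
    push_cast [← h]
    ring
  have ht1 : Nat.card G.ConnectedComponent = 1 := card_cc_eq_one hconn
  have ht2 : Nat.card G'.ConnectedComponent = 1 := card_cc_eq_one hG'conn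
  have hpt : pt G = pt G' + 7 / 4 := by
    rw [pt, pt, hecard, ht1, ht2, hn]
    push_cast
    ring
  refine ⟨hG'conn, ?_, hpt, ?_⟩
  · rw [hbeta]; push_cast; ring
  · rw [hbeta, hpt]; push_cast; ring
end
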